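/- arXiv:1901.06480 — 3 statements merged into one kernel-verified Lean document; each statement's English description precedes it below -/
import Mathlib

section
/- A finite group G is d-uniformly generated if and only if d equals the length ℓ(G) of G (the maximal length of an unrefinable chain of subgroups from 1 to G). -/
/-- A chain `⊥ = c 0 < c 1 < ⋯ < c n = ⊤` of subgroups is *unrefinable* if each
`c i` is maximal in `c (i+1)` (i.e. consecutive terms form a covering pair). -/
def IsUnrefinableChain {G : Type*} [Group G] {n : ℕ} (c : Fin (n + 1) → Subgroup G) : Prop :=
  c 0 = ⊥ ∧ c (Fin.last n) = ⊤ ∧ ∀ i : Fin n, c i.castSucc ⋖ c i.succ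

/-- The length `ℓ(G)`: the maximal length of an unrefinable chain of subgroups. -/
noncomputable def groupLength (G : Type*) [Group G] : ℕ :=
  sSup {n | ∃ c : Fin (n + 1) → Subgroup G, IsUnrefinableChain c}

/-- The depth `λ(G)`: the minimal length of an unrefinable chain of subgroups. -/
noncomputable def groupDepth (G : Type*) [Group G] : ℕ :=
  sInf {n | ∃ c : Fin (n + 1) → Subgroup G, IsUnrefinableChain c}

/-- `d(G)`: the minimal number of generators of `G`. -/
noncomputable def minGen (G : Type*) [Group G] : ℕ :=
  sInf {n | ∃ S : Finset G, S.card = n ∧ Subgroup.closure (S : Set G) = ⊤}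

/-- `m(G)`: the maximal size of an independent generating set of `G`. -/
noncomputable def maxIndep (G : Type*) [Group G] : ℕ :=
  sSup {n | ∃ S : Finset G, S.card = n ∧ Subgroup.closure (S : Set G) = ⊤ ∧
    ∀ a ∈ S, Subgroup.closure ((S : Set G) \ {a}) < ⊤}

/-- Given a tuple `x : Fin d → G`, the chain of subgroups
`⟨⟩ ≤ ⟨x 0⟩ ≤ ⟨x 0, x 1⟩ ≤ ⋯ ≤ ⟨x 0, …, x (d-1)⟩`. -/
def partialClosure {G : Type*} [Group G] {d : ℕ} (x : Fin d → G) (i : Fin (d + 1)) :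
    Subgroup G :=
  Subgroup.closure (x '' {j | (j : ℕ) < (i : ℕ)})

/-- `G` is *`d`-uniformly generated* if strictly ascending chains
`1 < ⟨x 1⟩ < ⋯ < ⟨x 1, …, x d⟩` exist, and every such chain ends at `G`. -/
def DUnifGen (G : Type*) [Group G] (d : ℕ) : Prop :=
  (∃ x : Fin d → G, StrictMono (partialClosure x)) ∧
  ∀ x : Fin d → G, StrictMono (partialClosure x) → Subgroup.closure (Set.range x) = ⊤

/-- `G` is *uniformly generated* if it is `d(G)`-uniformly generated. -/
def UniformlyGenerated (G : Type*) [Group G] : Prop :=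
  DUnifGen G (minGen G)

/-- `G` is elementary abelian: isomorphic to `(C_p)^k` for some prime `p`. -/
def IsElementaryAbelian (G : Type*) [Group G] : Prop :=
  ∃ (p k : ℕ), p.Prime ∧ Nonempty (G ≃* (Fin k → Multiplicative (ZMod p)))

/-- `G` is supersolvable: it has a normal series (all terms normal in `G`)
with cyclic factors (each step is obtained by adjoining a single element). -/
def IsSupersolvableGroup (G : Type*) [Group G] : Prop :=
  ∃ (n : ℕ) (c : Fin (n + 1) → Subgroup G),
    c 0 = ⊥ ∧ c (Fin.last n) = ⊤ ∧ Monotone c ∧ (∀ i, (c i).Normal) ∧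
    ∀ i : Fin n, ∃ g : G, c i.succ = c i.castSucc ⊔ Subgroup.zpowers g

/-- `G` is isomorphic to `(C_p)^{k} ⋊ C_q` where `C_q` acts by a nontrivial scalar:
expressed internally via a normal elementary abelian `p`-subgroup `N`, an element `g`
of order `q` complementing it, whose conjugation action raises every element of `N`
to a fixed power `c` which is a nontrivial scalar of multiplicative order `q` mod `p`. -/
def IsScalarExtension (G : Type*) [Group G] : Prop :=
  ∃ (p q : ℕ), p.Prime ∧ q.Prime ∧
    ∃ (N : Subgroup G) (g : G) (c : ℕ),
      N.Normal ∧ (∀ a ∈ N, ∀ b ∈ N, a * b = b * a) ∧ (∀ a ∈ N, a ^ p = 1) ∧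
      orderOf g = q ∧
      N ⊔ Subgroup.zpowers g = ⊤ ∧ N ⊓ Subgroup.zpowers g = ⊥ ∧
      (∀ n ∈ N, g * n * g⁻¹ = n ^ c) ∧
      c % p ≠ 1 % p ∧ c ^ q % p = 1 % p


/-!
Every strictly ascending chain of subgroups of a finite group refines to an unrefinable chain
from `1` to `G`, and every unrefinable chain `1 = G₀ ⋖ ⋯ ⋖ G_ℓ = G` has the form
`Gᵢ = ⟨x₁, …, xᵢ⟩` (pick any `xᵢ₊₁ ∈ Gᵢ₊₁ \ Gᵢ`). So strict chains `⟨x₁⟩ < ⋯ < ⟨x₁, …, x_d⟩`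
exist exactly for `d ≤ ℓ(G)`. For `d < ℓ(G)` the first `d` steps of a longest unrefinable chain
give one that stops below `G`; for `d = ℓ(G)` one that stopped below `G` could be extended by `G`
and refined to an unrefinable chain longer than `ℓ(G)`.
-/

open Subgroup

section

variable {G : Type*} [Group G]

section PartialClosure

variable {d : ℕ} (x : Fin d → G)

lemma partialClosure_zero : partialClosure x 0 = ⊥ := by
  simp [partialClosure]

lemma partialClosure_last : partialClosure x (Fin.last d) = closure (Set.range x) := by
  simp [partialClosure, ← Set.image_univ]

lemma partialClosure_succ (i : Fin d) :
    partialClosure x i.succ = partialClosure x i.castSucc ⊔ closure {x i} := by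
  have hidx : {j : Fin d | (j : ℕ) < (i.succ : ℕ)} =
      {j : Fin d | (j : ℕ) < (i.castSucc : ℕ)} ∪ {i} := by
    ext j
    simp only [Set.mem_ofPred_eq, Fin.val_succ, Fin.val_castSucc, Set.mem_union,
      Set.mem_singleton_iff, Fin.ext_iff]
    omega
  rw [partialClosure, hidx, Set.image_union, Set.image_singleton, Subgroup.closure_union]
  rfl

lemma partialClosure_take {m : ℕ} (h : m ≤ d) :
    partialClosure (Fin.take m h x) = partialClosure x ∘ Fin.castLE (Nat.succ_le_succ h) := by
  ext1 i
  simp only [partialClosure, Function.comp_apply]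
  congr 1
  ext g
  constructor
  · rintro ⟨j, hj, rfl⟩
    exact ⟨Fin.castLE h j, hj, rfl⟩
  · rintro ⟨j, hj, rfl⟩
    have hjm : (j : ℕ) < m := lt_of_lt_of_le hj (Nat.lt_succ_iff.mp i.isLt)
    exact ⟨⟨j, hjm⟩, hj, rfl⟩

end PartialClosure

lemma IsUnrefinableChain.strictMono {n : ℕ} {c : Fin (n + 1) → Subgroup G}
    (hc : IsUnrefinableChain c) : StrictMono c :=
  Fin.strictMono_iff_lt_succ.mpr fun i => (hc.2.2 i).lt

lemma exists_partialClosure_eq_of_covBy {n : ℕ} {c : Fin (n + 1) → Subgroup G} (h0 : c 0 = ⊥)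
    (hcov : ∀ i : Fin n, c i.castSucc ⋖ c i.succ) : ∃ x : Fin n → G, partialClosure x = c := by
  choose x hx_mem hx_not_mem using fun i => SetLike.exists_of_lt (hcov i).lt
  refine ⟨x, funext fun i => ?_⟩
  induction i using Fin.induction with
  | zero => rw [partialClosure_zero, h0]
  | succ i ih =>
    have hle : partialClosure x i.succ ≤ c i.succ := by
      rw [partialClosure_succ, ih, sup_le_iff, closure_le, Set.singleton_subset_iff]
      exact ⟨(hcov i).le, hx_mem i⟩
    have hlt : c i.castSucc < partialClosure x i.succ := by
      refine SetLike.lt_iff_le_and_exists.mpr ⟨?_, x i, ?_, hx_not_mem i⟩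
      · rw [partialClosure_succ, ih]; exact le_sup_left
      · rw [partialClosure_succ]; exact mem_sup_right (subset_closure rfl)
    exact ((hcov i).eq_or_eq hlt.le hle).resolve_left hlt.ne'

section Length

variable [Finite G]

lemma bddAbove_unrefinableChainLengths :
    BddAbove {n | ∃ c : Fin (n + 1) → Subgroup G, IsUnrefinableChain c} := by
  refine ⟨Nat.card (Subgroup G), fun n ⟨c, hc⟩ => ?_⟩
  have := Nat.card_le_card_of_injective c hc.strictMono.injective
  rw [Nat.card_eq_fintype_card, Fintype.card_fin] at this
  omega

lemma LTSeries.exists_isUnrefinableChain_length_ge (s : LTSeries (Subgroup G)) :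
    ∃ n, s.length ≤ n ∧ ∃ c : Fin (n + 1) → Subgroup G, IsUnrefinableChain c := by
  obtain ⟨t, i, -, hhead, hlast⟩ := s.exists_relSeries_covBy_and_head_eq_bot_and_last_eq_bot
  refine ⟨t.length, ?_, t, hhead, hlast, t.step⟩
  simpa using Fintype.card_le_of_embedding i

lemma exists_isUnrefinableChain_length_eq_groupLength :
    ∃ c : Fin (groupLength G + 1) → Subgroup G, IsUnrefinableChain c := by
  obtain ⟨n, -, hn⟩ :=
    LTSeries.exists_isUnrefinableChain_length_ge (RelSeries.singleton _ (⊥ : Subgroup G))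
  exact Nat.sSup_mem ⟨n, hn⟩ bddAbove_unrefinableChainLengths

lemma LTSeries.length_le_groupLength (s : LTSeries (Subgroup G)) : s.length ≤ groupLength G := by
  obtain ⟨n, hsn, hn⟩ := s.exists_isUnrefinableChain_length_ge
  exact hsn.trans (le_csSup bddAbove_unrefinableChainLengths hn)

lemma LTSeries.length_lt_groupLength (s : LTSeries (Subgroup G)) (hs : s.last ≠ ⊤) :
    s.length < groupLength G :=
  LTSeries.length_le_groupLength (s.snoc ⊤ (lt_top_iff_ne_top.mpr hs))

end Length

end

/-- A finite group `G` is `d`-uniformly generated iff `d = ℓ(G)`. -/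
theorem dUnifGen_iff_eq_groupLength (G : Type*) [Group G] [Finite G] (d : ℕ) :
    DUnifGen G d ↔ d = groupLength G := by
  obtain ⟨c, hc⟩ := exists_isUnrefinableChain_length_eq_groupLength (G := G)
  obtain ⟨x, rfl⟩ := exists_partialClosure_eq_of_covBy hc.1 hc.2.2
  constructor
  · rintro ⟨⟨y, hy⟩, huniform⟩
    have hle : d ≤ groupLength G := (LTSeries.mk d _ hy).length_le_groupLength
    refine hle.eq_of_not_lt fun hlt => ?_
    have htake := huniform (Fin.take d hle x) <| by
      rw [partialClosure_take]; exact hc.strictMono.comp (Fin.strictMono_castLE _)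
    rw [← partialClosure_last, partialClosure_take, Function.comp_apply, ← hc.2.1] at htake
    exact (hc.strictMono (show Fin.castLE _ (Fin.last d) < Fin.last _ from hlt)).ne htake
  · rintro rfl
    refine ⟨⟨x, hc.strictMono⟩, fun y hy => by_contra fun hne => ?_⟩
    rw [← partialClosure_last] at hne
    exact (LTSeries.mk _ _ hy).length_lt_groupLength hne |>.false
end

section
/- If G is a finite uniformly generated group, then its Fitting subgroup Fit(G) is elementary abelian. -/
/-!
Call a sequence `g₁, …, gₖ` irredundant if no `gᵢ` lies in `⟨g₁, …, gᵢ₋₁⟩`. In a `d`-uniformly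
generated group every irredundant sequence has length at most `d` (its first `d` terms already
generate `G`), while every generating sequence has length at least `d(G)`. When `d = d(G)`,
extending two sequences with the same span by a common irredundant tail up to `G` shows that an
irredundant sequence is no longer than any other sequence with the same span.

Comparing `g^(n/p), g` with `g`, for `n` the order of `g` and `p` a prime divisor of `n`, shows
that every nontrivial element has prime order. Comparing `z, a, b` with `a, b`, for `z` central
in `⟨a, b⟩`, shows that non-commuting `a, b` generate a subgroup with trivial centre, so nilpotent
subgroups are abelian. Finally, commuting elements of distinct prime orders `p, q` would have a
product of order `pq`, so an abelian subgroup has prime exponent.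
-/

open Subgroup

namespace Subgroup

variable {G : Type*} [Group G]

def adjoinList (H : Subgroup G) : List G → Subgroup G
  | [] => H
  | g :: l => (H ⊔ zpowers g).adjoinList l

def IsIrredundantList (H : Subgroup G) : List G → Prop
  | [] => True
  | g :: l => g ∉ H ∧ (H ⊔ zpowers g).IsIrredundantList l

theorem adjoinList_append (H : Subgroup G) (l₁ l₂ : List G) :
    H.adjoinList (l₁ ++ l₂) = (H.adjoinList l₁).adjoinList l₂ := by
  induction l₁ generalizing H with
  | nil => rfl
  | cons g l ih => exact ih _

theorem adjoinList_eq_sup_closure (H : Subgroup G) (l : List G) :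
    H.adjoinList l = H ⊔ closure {a | a ∈ l} := by
  induction l generalizing H with
  | nil => simp [adjoinList]
  | cons g l ih =>
    rw [adjoinList, ih, sup_assoc, zpowers_eq_closure, ← closure_union]
    congr 2
    ext
    simp

theorem IsIrredundantList.append {H : Subgroup G} {l₁ l₂ : List G}
    (h₁ : H.IsIrredundantList l₁) (h₂ : (H.adjoinList l₁).IsIrredundantList l₂) :
    H.IsIrredundantList (l₁ ++ l₂) := by
  induction l₁ generalizing H with
  | nil => exact h₂
  | cons g l ih => exact ⟨h₁.1, ih h₁.2 h₂⟩

theorem IsIrredundantList.take {H : Subgroup G} {l : List G} (h : H.IsIrredundantList l)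
    (n : ℕ) : H.IsIrredundantList (l.take n) := by
  induction l generalizing H n with
  | nil => simp [IsIrredundantList]
  | cons g l ih =>
    cases n with
    | zero => trivial
    | succ n => exact ⟨h.1, ih h.2 n⟩

theorem IsIrredundantList.adjoinList_take_lt {H : Subgroup G} {l : List G}
    (h : H.IsIrredundantList l) {i : ℕ} (hi : i < l.length) :
    H.adjoinList (l.take i) < H.adjoinList (l.take (i + 1)) := by
  induction l generalizing H i with
  | nil => simp at hi
  | cons g l ih =>
    cases i with
    | zero => exact left_lt_sup.2 (by rw [zpowers_le]; exact h.1)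
    | succ i => exact ih h.2 (by simpa using hi)

theorem exists_isIrredundantList_adjoinList_eq_top [Finite G] (H : Subgroup G) :
    ∃ l : List G, H.IsIrredundantList l ∧ H.adjoinList l = ⊤ := by
  induction H using WellFoundedGT.induction with
  | _ H ih =>
    by_cases hH : H = ⊤
    · exact ⟨[], trivial, hH⟩
    obtain ⟨g, hg⟩ : ∃ g, g ∉ H := by simpa [eq_top_iff'] using hH
    obtain ⟨l, hl, htop⟩ := ih _ (left_lt_sup.2 (by rwa [zpowers_le]))
    exact ⟨g :: l, ⟨hg, hl⟩, htop⟩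

end Subgroup

section PartialClosure

variable {G : Type*} [Group G]

theorem partialClosure_eq_adjoinList_take {d : ℕ} (x : Fin d → G) (i : Fin (d + 1)) :
    partialClosure x i = (⊥ : Subgroup G).adjoinList ((List.ofFn x).take i) := by
  rw [adjoinList_eq_sup_closure, bot_sup_eq, partialClosure]
  congr 1
  ext a
  simp only [Set.mem_image, List.mem_take_iff_getElem, List.getElem_ofFn,
    List.length_ofFn, lt_min_iff]
  exact ⟨fun ⟨j, hj, hja⟩ => ⟨j, ⟨hj, j.2⟩, hja⟩,
    fun ⟨j, hj, hja⟩ => ⟨⟨j, hj.2⟩, hj.1, hja⟩⟩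

theorem closure_range_eq_adjoinList {d : ℕ} (x : Fin d → G) :
    closure (Set.range x) = (⊥ : Subgroup G).adjoinList (List.ofFn x) := by
  rw [adjoinList_eq_sup_closure, bot_sup_eq]
  congr 1
  ext
  simp

theorem strictMono_partialClosure {d : ℕ} {x : Fin d → G}
    (h : (⊥ : Subgroup G).IsIrredundantList (List.ofFn x)) : StrictMono (partialClosure x) := by
  refine Fin.strictMono_iff_lt_succ.2 fun i => ?_
  simp only [partialClosure_eq_adjoinList_take, Fin.val_castSucc, Fin.val_succ]
  exact h.adjoinList_take_lt (by simp)

theorem DUnifGen.length_le {d : ℕ} (hG : DUnifGen G d) {l : List G}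
    (hl : (⊥ : Subgroup G).IsIrredundantList l) : l.length ≤ d := by
  by_contra! hd
  let x : Fin d → G := fun i => l[(i : ℕ)]
  have hx : List.ofFn x = l.take d := List.ext_getElem (by simp; omega) (by simp [x])
  have htop := hG.2 x (strictMono_partialClosure (hx ▸ hl.take d))
  rw [closure_range_eq_adjoinList, hx] at htop
  exact not_top_lt (htop ▸ hl.adjoinList_take_lt hd)

theorem minGen_le_length {l : List G} (hl : (⊥ : Subgroup G).adjoinList l = ⊤) :
    minGen G ≤ l.length := by
  classical
  rw [adjoinList_eq_sup_closure, bot_sup_eq] at hl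
  calc minGen G ≤ l.toFinset.card := Nat.sInf_le ⟨l.toFinset, rfl, by simpa using hl⟩
    _ ≤ l.length := l.toFinset_card_le

end PartialClosure

theorem isElementaryAbelian_of_commute_of_pow_eq_one {K : Type*} [Group K] [Finite K] {p : ℕ}
    (hp : p.Prime) (hK : ∀ a b : K, Commute a b) (hpow : ∀ x : K, x ^ p = 1) :
    IsElementaryAbelian K := by
  let _ : CommGroup K := { mul_comm := hK }
  have : Fact p.Prime := ⟨hp⟩
  let _ : Module (ZMod p) (Additive K) := AddCommGroup.zmodModule (n := p) hpow
  let e := (Module.finBasis (ZMod p) (Additive K)).equivFun.toAddEquiv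
  exact ⟨p, _, hp, ⟨(MulEquiv.multiplicativeAdditive K).symm.trans
    ((AddEquiv.toMultiplicative e).trans (MulEquiv.funMultiplicative _ _))⟩⟩

namespace UniformlyGenerated

variable {G : Type*} [Group G] [Finite G] (hG : UniformlyGenerated G)
include hG

theorem length_le_length_of_adjoinList_eq {l₁ l₂ : List G}
    (h₁ : (⊥ : Subgroup G).IsIrredundantList l₁)
    (he : (⊥ : Subgroup G).adjoinList l₁ = (⊥ : Subgroup G).adjoinList l₂) :
    l₁.length ≤ l₂.length := by
  obtain ⟨w, hw, htop⟩ :=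
    exists_isIrredundantList_adjoinList_eq_top ((⊥ : Subgroup G).adjoinList l₁)
  have h₁w : (l₁ ++ w).length ≤ minGen G := DUnifGen.length_le hG (h₁.append hw)
  have h₂w : minGen G ≤ (l₂ ++ w).length :=
    minGen_le_length (by rw [adjoinList_append, ← he, htop])
  simp only [List.length_append] at h₁w h₂w
  omega

theorem zpowers_eq_of_mem_zpowers {g h : G} (hh : h ∈ zpowers g) (h1 : h ≠ 1) :
    zpowers h = zpowers g := by
  refine le_antisymm (zpowers_le.2 hh) (zpowers_le.2 ?_)
  by_contra hg
  have hirr : (⊥ : Subgroup G).IsIrredundantList [h, g] := ⟨by simpa, by simpa, trivial⟩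
  have hspan : (⊥ : Subgroup G).adjoinList [h, g] = (⊥ : Subgroup G).adjoinList [g] := by
    simp [adjoinList, zpowers_le.2 hh]
  simpa using hG.length_le_length_of_adjoinList_eq hirr hspan

theorem orderOf_prime {g : G} (hg : g ≠ 1) : (orderOf g).Prime := by
  set p := (orderOf g).minFac
  have hp : p.Prime := Nat.minFac_prime (orderOf_eq_one_iff.not.2 hg)
  have hpow : orderOf (g ^ (orderOf g / p)) = p :=
    orderOf_pow_orderOf_div (orderOf_pos g).ne' (Nat.minFac_dvd _)
  have hpow1 : g ^ (orderOf g / p) ≠ 1 := fun h =>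
    hp.one_lt.ne' (by rw [← hpow, h, orderOf_one])
  have hzp := hG.zpowers_eq_of_mem_zpowers (npow_mem_zpowers g _) hpow1
  rwa [← Nat.card_zpowers, ← hzp, Nat.card_zpowers, hpow]

theorem orderOf_eq_of_commute {a b : G} (hab : Commute a b) (ha : a ≠ 1) (hb : b ≠ 1) :
    orderOf a = orderOf b := by
  by_contra hne
  have hmul := hab.orderOf_mul_eq_mul_orderOf_of_coprime
    ((Nat.coprime_primes (hG.orderOf_prime ha) (hG.orderOf_prime hb)).2 hne)
  have hab1 : a * b ≠ 1 := fun h => by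
    rw [h, orderOf_one] at hmul
    exact ha (orderOf_eq_one_iff.1 (mul_eq_one.1 hmul.symm).1)
  exact Nat.not_prime_mul (orderOf_eq_one_iff.not.2 ha) (orderOf_eq_one_iff.not.2 hb)
    (hmul ▸ hG.orderOf_prime hab1)

theorem center_closure_pair_eq_bot {a b : G} (hab : ¬Commute a b) :
    center (closure {a, b}) = ⊥ := by
  have ha : a ∈ closure {a, b} := subset_closure (by simp)
  have hb : b ∈ closure {a, b} := subset_closure (by simp)
  refine eq_bot_iff.2 fun z hz => (mem_bot.2 <| Subtype.ext <| of_not_not fun hz1 => ?_)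
  have hza : Commute (z : G) a := (congrArg Subtype.val (mem_center_iff.1 hz ⟨a, ha⟩)).symm
  have hzb : Commute (z : G) b := (congrArg Subtype.val (mem_center_iff.1 hz ⟨b, hb⟩)).symm
  have haz : a ∉ zpowers (z : G) := fun ⟨k, hk⟩ => hab (hk ▸ hzb.zpow_left k)
  have hbza : b ∉ zpowers (z : G) ⊔ zpowers a := by
    have hle : zpowers (z : G) ⊔ zpowers a ≤ centralizer {a} := sup_le
      (zpowers_le.2 (mem_centralizer_singleton_iff.2 hza))
      (zpowers_le.2 (mem_centralizer_singleton_iff.2 rfl))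
    exact fun hmem => hab (Commute.symm (mem_centralizer_singleton_iff.1 (hle hmem)))
  have hirr : (⊥ : Subgroup G).IsIrredundantList [z, a, b] :=
    ⟨by simpa using hz1, by simpa using haz, by simpa using hbza, trivial⟩
  have hspan : (⊥ : Subgroup G).adjoinList [z, a, b] = (⊥ : Subgroup G).adjoinList [a, b] := by
    have hclosure : closure {a, b} = zpowers a ⊔ zpowers b := by
      rw [zpowers_eq_closure, zpowers_eq_closure, ← Subgroup.closure_union, Set.singleton_union]
    simp only [adjoinList, bot_sup_eq]
    rw [sup_assoc, sup_eq_right, zpowers_le, ← hclosure]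
    exact z.2
  simpa using hG.length_le_length_of_adjoinList_eq hirr hspan

theorem commute_of_isNilpotent (H : Subgroup G) [Group.IsNilpotent H] (x y : H) :
    Commute x y := by
  by_contra hxy
  have hab : ¬Commute (x : G) y := fun h => hxy (Subtype.ext h)
  have hle : closure {(x : G), (y : G)} ≤ H := by simp [closure_le, Set.insert_subset_iff]
  have := Group.nilpotent_of_mulEquiv (subgroupOfEquivOfLe hle)
  have : Nontrivial (closure {(x : G), (y : G)}) := by
    refine (nontrivial_iff_ne_bot _).2 fun hbot => hab ?_
    have hx : (x : G) ∈ closure {(x : G), (y : G)} := subset_closure (by simp)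
    rw [hbot, mem_bot] at hx
    rw [hx]
    exact Commute.one_left _
  exact Group.IsNilpotent.center_ne_bot _ (hG.center_closure_pair_eq_bot hab)

theorem exists_prime_forall_pow_eq_one {H : Subgroup G} (hH : ∀ x y : H, Commute x y) :
    ∃ p : ℕ, p.Prime ∧ ∀ x : H, x ^ p = 1 := by
  by_cases htriv : ∀ x : H, x = 1
  · exact ⟨2, Nat.prime_two, fun x => by rw [htriv x, one_pow]⟩
  push Not at htriv
  obtain ⟨a, ha⟩ := htriv
  have ha' : (a : G) ≠ 1 := by simpa using ha
  refine ⟨orderOf a, orderOf_coe a ▸ hG.orderOf_prime ha', fun x => ?_⟩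
  rcases eq_or_ne x 1 with rfl | hx
  · exact one_pow _
  have hax : Commute (a : G) x := (hH a x).map H.subtype
  rw [← orderOf_coe a, hG.orderOf_eq_of_commute hax ha' (by simpa using hx),
    orderOf_coe, pow_orderOf_eq_one]

theorem isElementaryAbelian_of_isNilpotent (H : Subgroup G) [Group.IsNilpotent H] :
    IsElementaryAbelian H := by
  have hH := hG.commute_of_isNilpotent H
  obtain ⟨p, hp, hpow⟩ := hG.exists_prime_forall_pow_eq_one hH
  exact isElementaryAbelian_of_commute_of_pow_eq_one hp hH hpow

end UniformlyGenerated

/-- the Fitting subgroup (the largest normal nilpotent subgroup) of a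
finite uniformly generated group is elementary abelian. -/
theorem fitting_isElementaryAbelian (G : Type*) [Group G] [Finite G]
    (hG : UniformlyGenerated G) (F : Subgroup G)
    (hF : IsGreatest {N : Subgroup G | N.Normal ∧ Group.IsNilpotent ↥N} F) :
    IsElementaryAbelian ↥F :=
  have : Group.IsNilpotent F := hF.1.2
  hG.isElementaryAbelian_of_isNilpotent F
end

section
/- If G is a finite nilpotent group with trivial Frattini subgroup whose order is divisible by at least two distinct primes, then d(G) < m(G), where m(G) is the maximal size of an independent generating set. -/
/-!
Since `G` is nilpotent, every maximal subgroup `M` is normal and `G ⧸ M` has no subgroups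
besides `⊥` and `⊤`, so it is generated by each of its nontrivial elements. As `Φ(G) = 1`, it
follows that `G` is abelian and that every element has squarefree order.

Start from a generating set of size `d(G)`; it is independent. Given an independent generating set
`T` containing an element `t` of composite order `uv` (`u, v > 1` coprime), replace `t` by
`t ^ u, t ^ v`: either this is a larger independent generating set, or one of `t ^ u`, `t ^ v`
alone can replace `t`, which lowers the sum of the orders of the elements. Once all elements have
prime order, two of them of distinct prime orders (which exist since `|G|` has two prime
divisors) can be merged into their product, giving a generating set with fewer than `d(G)`
elements. Hence some independent generating set has more than `d(G)` elements.
-/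

open Subgroup

theorem Nat.exists_coprime_mul_eq_of_squarefree {n : ℕ} (hsq : Squarefree n) (hn : 2 ≤ n)
    (hnp : ¬n.Prime) : ∃ u v, u.Coprime v ∧ u * v = n ∧ 1 < u ∧ 1 < v := by
  obtain ⟨u, hu, hu2, hun⟩ := Nat.exists_dvd_of_not_prime2 hn hnp
  have hmul : u * (n / u) = n := Nat.mul_div_cancel' hu
  refine ⟨u, n / u, Nat.coprime_of_squarefree_mul (by rwa [hmul]), hmul, hu2, ?_⟩
  by_contra! h
  interval_cases h' : n / u <;> omega

section Elements

variable {G : Type*} [Group G]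

theorem mem_of_pow_mem_of_coprime {K : Subgroup G} {t : G} {u v : ℕ} (huv : u.Coprime v)
    (hu : t ^ u ∈ K) (hv : t ^ v ∈ K) : t ∈ K := by
  have : t = (t ^ u) ^ u.gcdA v * (t ^ v) ^ u.gcdB v := by
    rw [← zpow_natCast t u, ← zpow_natCast t v, ← zpow_mul, ← zpow_mul, ← zpow_add,
      ← Nat.gcd_eq_gcd_ab, huv.gcd_eq_one, Nat.cast_one, zpow_one]
  rw [this]
  exact mul_mem (zpow_mem hu _) (zpow_mem hv _)

theorem Commute.mem_zpowers_mul_of_coprime {s t : G} (hst : Commute s t)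
    (h : (orderOf s).Coprime (orderOf t)) : s ∈ zpowers (s * t) := by
  obtain ⟨m, hm⟩ := exists_pow_eq_self_of_coprime (x := s) h.symm
  have hpow : (s * t) ^ orderOf t = s ^ orderOf t := by
    rw [hst.mul_pow, pow_orderOf_eq_one, mul_one]
  have hmem : ((s * t) ^ orderOf t) ^ m ∈ zpowers (s * t) :=
    Subgroup.pow_mem _ (Subgroup.pow_mem _ (mem_zpowers _) _) _
  rwa [hpow, hm] at hmem

theorem IsPGroup.eq_of_prime_dvd_card [Finite G] {p r : ℕ} (hG : IsPGroup r G) (hp : p.Prime)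
    (hr : r.Prime) (hpd : p ∣ Nat.card G) : p = r := by
  have := (isPGroup_iff_primeFactors_card_subset hr.ne_zero).mp hG
    (Nat.mem_primeFactors.mpr ⟨hp, hpd, Nat.card_pos.ne'⟩)
  rwa [hr.primeFactors, Finset.mem_singleton] at this

end Elements

section Frattini

variable {G : Type*} [Group G]

theorem mem_frattini_iff {x : G} :
    x ∈ frattini G ↔ ∀ M : Subgroup G, IsCoatom M → x ∈ M := by
  simp [frattini, Order.radical, mem_iInf]

theorem zpowers_eq_top_of_isCoatom {M : Subgroup G} [M.Normal] (hM : IsCoatom M) {x : G ⧸ M}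
    (hx : x ≠ 1) : zpowers x = ⊤ := by
  obtain ⟨g, rfl⟩ := QuotientGroup.mk'_surjective M x
  have hgM : g ∉ M := by rwa [ne_eq, QuotientGroup.mk'_apply, QuotientGroup.eq_one_iff] at hx
  have hlt : M < (zpowers (QuotientGroup.mk' M g)).comap (QuotientGroup.mk' M) :=
    lt_of_le_of_ne (QuotientGroup.le_comap_mk' M _) fun h => hgM (h ▸ mem_zpowers _)
  apply comap_injective (QuotientGroup.mk'_surjective M)
  rw [hM.2 _ hlt, comap_top]

theorem commute_of_isCoatom {M : Subgroup G} [M.Normal] (hM : IsCoatom M) (x y : G ⧸ M) :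
    Commute x y := by
  rcases eq_or_ne x 1 with rfl | hx
  · exact Commute.one_left y
  · obtain ⟨n, rfl⟩ : y ∈ zpowers x := zpowers_eq_top_of_isCoatom hM hx ▸ mem_top y
    exact (Commute.refl x).zpow_right n

theorem eq_one_of_frattini_eq_bot [Group.IsNilpotent G] (hΦ : frattini G = ⊥) {x : G}
    (h : ∀ (M : Subgroup G) [M.Normal], IsCoatom M → (x : G ⧸ M) = 1) : x = 1 := by
  rw [← mem_bot, ← hΦ, mem_frattini_iff]
  intro M hM
  have := Group.normalizerCondition_of_isNilpotent.normal_of_coatom M hM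
  exact (QuotientGroup.eq_one_iff x).mp (h M hM)

theorem commute_of_frattini_eq_bot [Group.IsNilpotent G] (hΦ : frattini G = ⊥) (a b : G) :
    Commute a b := by
  rw [← commutatorElement_eq_one_iff_commute]
  refine eq_one_of_frattini_eq_bot hΦ fun M _ hM => ?_
  rw [← QuotientGroup.mk'_apply, map_commutatorElement, commutatorElement_eq_one_iff_commute]
  exact commute_of_isCoatom hM _ _

theorem squarefree_orderOf_of_frattini_eq_bot [Finite G] [Group.IsNilpotent G]
    (hΦ : frattini G = ⊥) (x : G) : Squarefree (orderOf x) := by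
  refine Nat.squarefree_iff_prime_squarefree.mpr fun r hr ⟨k, hk⟩ => ?_
  have hk0 : k ≠ 0 := by rintro rfl; exact (orderOf_pos x).ne' (by simpa using hk)
  have hz : (x ^ k) ^ r ≠ 1 := by
    rw [← pow_mul]
    exact pow_ne_one_of_lt_orderOf (mul_ne_zero hk0 hr.ne_zero)
      (by rw [hk]; nlinarith [hr.one_lt, Nat.pos_of_ne_zero hk0])
  refine hz (eq_one_of_frattini_eq_bot hΦ fun M _ hM => ?_)
  set w : G ⧸ M := ((x ^ k : G) : G ⧸ M)
  rw [QuotientGroup.mk_pow]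
  by_contra hne
  have hwr : (w ^ r) ^ r = 1 := by
    rw [← pow_mul, ← QuotientGroup.mk_pow, ← pow_mul,
      show k * (r * r) = orderOf x by rw [hk]; ring, pow_orderOf_eq_one, QuotientGroup.mk_one]
  -- `G ⧸ M` is generated by the nontrivial element `w ^ r`, which has exponent `r`
  obtain ⟨j, hj⟩ : w ∈ zpowers (w ^ r) := zpowers_eq_top_of_isCoatom hM hne ▸ mem_top w
  apply hne
  change w ^ r = 1
  rw [← hj, ← zpow_natCast, ← zpow_mul, mul_comm, zpow_mul, zpow_natCast, hwr, one_zpow]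

end Frattini

section Generation

variable {G : Type*} [Group G]

def IsIndepGenerating (S : Finset G) : Prop :=
  closure (S : Set G) = ⊤ ∧ ∀ a ∈ S, closure ((S : Set G) \ {a}) < ⊤

theorem minGen_le_card {S : Finset G} (hS : closure (S : Set G) = ⊤) : minGen G ≤ S.card :=
  Nat.sInf_le ⟨S, rfl, hS⟩

theorem exists_card_eq_minGen [Finite G] :
    ∃ S : Finset G, S.card = minGen G ∧ closure (S : Set G) = ⊤ := by
  have := Fintype.ofFinite G
  exact Nat.sInf_mem (s := {n | ∃ S : Finset G, S.card = n ∧ closure (S : Set G) = ⊤})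
    ⟨_, Finset.univ, rfl, by simp⟩

theorem isIndepGenerating_of_card_eq_minGen {S : Finset G} (hS : closure (S : Set G) = ⊤)
    (hcard : S.card = minGen G) : IsIndepGenerating S := by
  classical
  refine ⟨hS, fun a ha => lt_top_iff_ne_top.mpr fun h => ?_⟩
  have hle := minGen_le_card (S := S.erase a) (by rwa [Finset.coe_erase])
  rw [Finset.card_erase_of_mem ha] at hle
  have := Finset.card_pos.mpr ⟨a, ha⟩
  omega

theorem card_le_maxIndep [Finite G] {S : Finset G} (hS : IsIndepGenerating S) :
    S.card ≤ maxIndep G := by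
  have := Fintype.ofFinite G
  refine le_csSup ⟨Fintype.card G, ?_⟩ ⟨S, rfl, hS⟩
  rintro _ ⟨T, rfl, -⟩
  exact T.card_le_univ

theorem closure_insert_pow_insert_pow_erase [DecidableEq G] {T : Finset G}
    (hT : closure (T : Set G) = ⊤) {t : G} {u v : ℕ} (huv : u.Coprime v) :
    closure (↑(insert (t ^ u) (insert (t ^ v) (T.erase t))) : Set G) = ⊤ := by
  rw [eq_top_iff, ← hT, closure_le]
  intro y hy
  by_cases hyt : y = t
  · subst hyt
    exact mem_of_pow_mem_of_coprime huv (subset_closure (by simp)) (subset_closure (by simp))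
  · exact subset_closure (by simp [hyt, Finset.mem_coe.mp hy])

theorem closure_insert_mul_erase_erase [DecidableEq G] {T : Finset G}
    (hT : closure (T : Set G) = ⊤) {s t : G} (hst : Commute s t)
    (h : (orderOf s).Coprime (orderOf t)) :
    closure (↑(insert (s * t) ((T.erase s).erase t)) : Set G) = ⊤ := by
  have hK : zpowers (s * t) ≤ closure (↑(insert (s * t) ((T.erase s).erase t)) : Set G) :=
    zpowers_le.mpr (subset_closure (by simp))
  rw [eq_top_iff, ← hT, closure_le]
  intro y hy
  rcases eq_or_ne y s with rfl | hys
  · exact hK (hst.mem_zpowers_mul_of_coprime h)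
  rcases eq_or_ne y t with rfl | hyt
  · exact hK (hst.eq ▸ hst.symm.mem_zpowers_mul_of_coprime h.symm)
  · exact subset_closure (by simp [hys, hyt, Finset.mem_coe.mp hy])

namespace IsIndepGenerating

variable {T : Finset G}

theorem closure_erase_ne_top [DecidableEq G] (hT : IsIndepGenerating T) {a : G} (ha : a ∈ T) :
    closure (T.erase a : Set G) ≠ ⊤ := by
  rw [Finset.coe_erase]
  exact (hT.2 a ha).ne

theorem one_notMem (hT : IsIndepGenerating T) : (1 : G) ∉ T := by
  classical
  exact fun h => hT.closure_erase_ne_top h <| by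
    rw [← closure_insert_one, ← Finset.coe_insert, Finset.insert_erase h, hT.1]

theorem of_subset_zpowers_union [DecidableEq G] (hT : IsIndepGenerating T) {t : G} (ht : t ∈ T)
    {S : Finset G} (hS : (S : Set G) ⊆ zpowers t ∪ (T.erase t : Set G))
    (hgen : closure (S : Set G) = ⊤)
    (hmin : ∀ c ∈ S, c ∉ T.erase t → closure (S.erase c : Set G) ≠ ⊤) :
    IsIndepGenerating S := by
  refine ⟨hgen, fun c hc => ?_⟩
  rw [← Finset.coe_erase, lt_top_iff_ne_top]
  by_cases hcE : c ∈ T.erase t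
  · obtain ⟨hct, hcT⟩ := Finset.mem_erase.mp hcE
    refine ne_top_of_le_ne_top (hT.closure_erase_ne_top hcT) ((closure_le _).mpr fun y hy => ?_)
    obtain ⟨hyc, hyS⟩ := Finset.mem_erase.mp hy
    rcases hS hyS with hy | hy
    · exact zpowers_le.mpr (subset_closure (Finset.mem_erase.mpr ⟨hct.symm, ht⟩)) hy
    · exact subset_closure (Finset.mem_erase.mpr ⟨hyc, (Finset.mem_erase.mp hy).2⟩)
  · exact hmin c hc hcE

theorem split [DecidableEq G] (hT : IsIndepGenerating T) {t : G} (ht : t ∈ T) {u v : ℕ}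
    (huv : u.Coprime v) :
    (∃ S : Finset G, IsIndepGenerating S ∧ T.card < S.card) ∨
      ∃ w ∈ ({u, v} : Finset ℕ), IsIndepGenerating (insert (t ^ w) (T.erase t)) := by
  set E := T.erase t
  have hpow : ∀ w : ℕ, t ^ w ∈ zpowers t := npow_mem_zpowers t
  have hE : closure (E : Set G) ≠ ⊤ := hT.closure_erase_ne_top ht
  have hsingle : ∀ w, closure (↑(insert (t ^ w) E) : Set G) = ⊤ →
      IsIndepGenerating (insert (t ^ w) E) := fun w hw =>
    hT.of_subset_zpowers_union ht
      (by rw [Finset.coe_insert]; exact Set.insert_subset (Or.inl (hpow w)) Set.subset_union_right)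
      hw fun c hc hcE => by
        obtain rfl := (Finset.mem_insert.mp hc).resolve_right hcE
        exact ne_top_of_le_ne_top hE (closure_mono (by simp))
  by_cases hu : closure (↑(insert (t ^ u) E) : Set G) = ⊤
  · exact Or.inr ⟨u, by simp, hsingle u hu⟩
  by_cases hv : closure (↑(insert (t ^ v) E) : Set G) = ⊤
  · exact Or.inr ⟨v, by simp, hsingle v hv⟩
  have hgen := closure_insert_pow_insert_pow_erase hT.1 (t := t) huv
  have hvE : t ^ v ∉ E := fun h => hu (by rwa [Finset.insert_eq_of_mem h] at hgen)
  have huvE : t ^ u ∉ insert (t ^ v) E := fun h => hv (by rwa [Finset.insert_eq_of_mem h] at hgen)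
  refine Or.inl ⟨_, hT.of_subset_zpowers_union ht ?_ hgen fun c hc hcE => ?_, ?_⟩
  · simp only [Finset.coe_insert]
    exact Set.insert_subset (Or.inl (hpow u))
      (Set.insert_subset (Or.inl (hpow v)) Set.subset_union_right)
  · rcases Finset.mem_insert.mp hc with rfl | hc
    · exact ne_top_of_le_ne_top hv
        (closure_mono (Finset.coe_subset.mpr (Finset.erase_insert_subset _ _)))
    · obtain rfl := (Finset.mem_insert.mp hc).resolve_right hcE
      refine ne_top_of_le_ne_top hu (closure_mono ?_)
      intro y
      simp only [E, Finset.coe_erase, Finset.coe_insert, Set.mem_sdiff, Set.mem_insert_iff]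
      tauto
  · rw [Finset.card_insert_of_notMem huvE, Finset.card_insert_of_notMem hvE,
      Finset.card_erase_add_one ht]
    omega

theorem exists_card_lt_or_sum_orderOf_lt [Finite G] (hT : IsIndepGenerating T) {t : G}
    (ht : t ∈ T) (hsf : Squarefree (orderOf t))
    (hnp : ¬(orderOf t).Prime) :
    (∃ S : Finset G, IsIndepGenerating S ∧ T.card < S.card) ∨
      ∃ S : Finset G, IsIndepGenerating S ∧ S.card = T.card ∧
        ∑ s ∈ S, orderOf s < ∑ s ∈ T, orderOf s := by
  classical
  have h2 : 2 ≤ orderOf t := by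
    have hne : orderOf t ≠ 1 := fun h => hT.one_notMem (orderOf_eq_one_iff.mp h ▸ ht)
    have := orderOf_pos t
    omega
  obtain ⟨u, v, huv, hmul, hu, hv⟩ := Nat.exists_coprime_mul_eq_of_squarefree hsf h2 hnp
  refine (hT.split ht huv).imp_right fun ⟨w, hw, hS⟩ => ⟨_, hS, ?_⟩
  have hwE : t ^ w ∉ T.erase t := fun h =>
    hT.closure_erase_ne_top ht (by rw [← Finset.insert_eq_of_mem h]; exact hS.1)
  obtain ⟨hwt, hw1⟩ : w ∣ orderOf t ∧ 1 < w := by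
    rcases Finset.mem_insert.mp hw with rfl | hw
    · exact ⟨Dvd.intro _ hmul, hu⟩
    · obtain rfl := Finset.mem_singleton.mp hw
      exact ⟨Dvd.intro_left _ hmul, hv⟩
  refine ⟨by rw [Finset.card_insert_of_notMem hwE, Finset.card_erase_add_one ht], ?_⟩
  rw [Finset.sum_insert hwE, ← Finset.add_sum_erase _ _ ht, orderOf_pow_of_dvd (by omega) hwt]
  exact Nat.add_lt_add_right (Nat.div_lt_self (by omega) hw1) _

end IsIndepGenerating

end Generation

section Abelian

variable {G : Type*} [CommGroup G]

theorem pow_eq_one_of_closure_eq_top {T : Set G} (hT : closure T = ⊤) {r : ℕ}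
    (h : ∀ t ∈ T, t ^ r = 1) (g : G) : g ^ r = 1 :=
  (closure_le (powMonoidHom r).ker).mpr (fun t ht => MonoidHom.mem_ker.mpr (h t ht))
    (hT ▸ mem_top g)

theorem exists_closure_card_lt_of_forall_prime_orderOf (hG : ∀ r, r.Prime → ¬IsPGroup r G)
    {T : Finset G} (hT : closure (T : Set G) = ⊤) (hprime : ∀ t ∈ T, (orderOf t).Prime) :
    ∃ S : Finset G, closure (S : Set G) = ⊤ ∧ S.card < T.card := by
  classical
  by_cases hdist : ∃ s ∈ T, ∃ t ∈ T, orderOf s ≠ orderOf t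
  · obtain ⟨s, hs, t, ht, hst⟩ := hdist
    have hcop := (Nat.coprime_primes (hprime s hs) (hprime t ht)).mpr hst
    refine ⟨_, closure_insert_mul_erase_erase hT (Commute.all s t) hcop, ?_⟩
    have hts : t ∈ T.erase s := Finset.mem_erase.mpr ⟨fun h => hst (h ▸ rfl), ht⟩
    have := Finset.card_erase_add_one hs
    have := Finset.card_erase_add_one hts
    have := Finset.card_insert_le (s * t) ((T.erase s).erase t)
    omega
  push Not at hdist
  obtain ⟨r, hr, hTr⟩ : ∃ r, r.Prime ∧ ∀ t ∈ T, t ^ r = 1 := by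
    rcases T.eq_empty_or_nonempty with rfl | ⟨t₀, ht₀⟩
    · exact ⟨2, Nat.prime_two, by simp⟩
    · exact ⟨orderOf t₀, hprime t₀ ht₀, fun t ht => hdist t ht t₀ ht₀ ▸ pow_orderOf_eq_one t⟩
  exact absurd (fun g => ⟨1, by rw [pow_one]; exact pow_eq_one_of_closure_eq_top hT hTr g⟩)
    (hG r hr)

variable [Finite G]

theorem IsIndepGenerating.exists_card_lt_or_exists_closure_card_lt
    (hsf : ∀ x : G, Squarefree (orderOf x)) (hG : ∀ r, r.Prime → ¬IsPGroup r G)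
    {T : Finset G} (hT : IsIndepGenerating T) :
    (∃ S : Finset G, IsIndepGenerating S ∧ T.card < S.card) ∨
      ∃ S : Finset G, closure (S : Set G) = ⊤ ∧ S.card < T.card := by
  induction hN : ∑ t ∈ T, orderOf t using Nat.strong_induction_on generalizing T with
  | _ N ih =>
  subst hN
  by_cases hcomp : ∃ t ∈ T, ¬(orderOf t).Prime
  · obtain ⟨t, ht, hnp⟩ := hcomp
    rcases IsIndepGenerating.exists_card_lt_or_sum_orderOf_lt hT ht (hsf t) hnp with
      hbig | ⟨S, hS, hcard, hsum⟩
    · exact Or.inl hbig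
    · rw [← hcard]
      exact ih _ hsum hS rfl
  · push Not at hcomp
    exact Or.inr (exists_closure_card_lt_of_forall_prime_orderOf hG hT.1 hcomp)

theorem minGen_lt_maxIndep_of_squarefree (hsf : ∀ x : G, Squarefree (orderOf x))
    (hG : ∀ r, r.Prime → ¬IsPGroup r G) : minGen G < maxIndep G := by
  obtain ⟨S, hcard, hgen⟩ := exists_card_eq_minGen (G := G)
  rcases (isIndepGenerating_of_card_eq_minGen hgen hcard).exists_card_lt_or_exists_closure_card_lt
    hsf hG with ⟨T, hT, hlt⟩ | ⟨T, hT, hlt⟩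
  · exact hcard ▸ hlt.trans_le (card_le_maxIndep hT)
  · exact absurd (minGen_le_card hT) (by omega)

end Abelian

/-- a finite nilpotent group with trivial Frattini subgroup whose order
is divisible by two distinct primes satisfies `d(G) < m(G)`. -/
theorem minGen_lt_maxIndep (G : Type*) [Group G] [Finite G] [Group.IsNilpotent G]
    (hΦ : frattini G = ⊥) (p q : ℕ) (hp : p.Prime) (hq : q.Prime) (hpq : p ≠ q)
    (hpd : p ∣ Nat.card G) (hqd : q ∣ Nat.card G) :
    minGen G < maxIndep G := by
  let : CommGroup G := { mul_comm := fun a b => (commute_of_frattini_eq_bot hΦ a b).eq }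
  exact minGen_lt_maxIndep_of_squarefree (squarefree_orderOf_of_frattini_eq_bot hΦ)
    fun r hr hG => hpq ((hG.eq_of_prime_dvd_card hp hr hpd).trans
      (hG.eq_of_prime_dvd_card hq hr hqd).symm)
end
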